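/- There exists an absolute constant C > 0 such that for every n ≥ 5 and every translation-invariant nearest-neighbor Hamiltonian H = Σ_{i∈ℤ/nℤ} H_i on n qubits generated by a Hermitian traceless 4×4 matrix h with ‖h‖ ≤ 1 and satisfying tr(H_i H_j) = 0 for all i ≠ j, one has |tr(H H_1 H H_1)/2^n − n ⟨H_1²⟩²| ≤ C, where ⟨X⟩ := tr(X)/2^n. -/

import Mathlib

open Matrix Filter Finset
open scoped Classical

/-- computational basis configurations of `n` qubits -/
abbrev Cfg (n : ℕ) := Fin n → Fin 2

/-- the site following `i` in the cyclic order on `ℤ/nℤ` -/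
def nxt {n : ℕ} (i : Fin n) : Fin n :=
  ⟨(i.1 + 1) % n, Nat.mod_lt _ (Nat.lt_of_le_of_lt (Nat.zero_le _) i.2)⟩

/-- the operator acting as the 4×4 matrix `h` on the two neighboring sites `i, i+1`
and as the identity elsewhere -/
noncomputable def twoSite (n : ℕ) (i : Fin n)
    (h : Matrix (Fin 2 × Fin 2) (Fin 2 × Fin 2) ℂ) : Matrix (Cfg n) (Cfg n) ℂ :=
  fun x y =>
    if ∀ j : Fin n, j ≠ i → j ≠ nxt i → x j = y j then
      h (x i, x (nxt i)) (y i, y (nxt i))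
    else 0

/-- the translation-invariant nearest-neighbor Hamiltonian generated by `h` -/
noncomputable def ham (h : Matrix (Fin 2 × Fin 2) (Fin 2 × Fin 2) ℂ) (n : ℕ) :
    Matrix (Cfg n) (Cfg n) ℂ :=
  ∑ i : Fin n, twoSite n i h

/-- normalized trace ⟨X⟩ = tr X / dim -/
noncomputable def nTrace {d : Type*} [Fintype d] [DecidableEq d] (X : Matrix d d ℂ) : ℂ :=
  X.trace / (Fintype.card d)

/-- the ℓ²→ℓ² operator norm of a matrix -/
noncomputable def opNorm {d : Type*} [Fintype d] [DecidableEq d] (X : Matrix d d ℂ) : ℝ :=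
  ‖LinearMap.toContinuousLinearMap (Matrix.toEuclideanLin X)‖

/-!
Expanding `H = ∑ i, H_i` gives `tr (H H₁ H H₁) = ∑ i j, tr (H_i H₁ H_j H₁)`. The basic tool is
that the trace factorises over operators acting on disjoint sets of sites:
`2 ^ n * tr (X Y) = tr X * tr Y`. If neither bond `i` nor bond `j` meets the bond `{1, 2}` of
`H₁`, then `H₁` commutes with `H_j` and the term equals `tr (H_i H_j) tr (H₁²) / 2 ^ n`: by
orthogonality it vanishes for `i ≠ j`, and for `i = j` it is `2 ^ n ⟨H₁²⟩²`. If only one of the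
two bonds meets `{1, 2}` and the other avoids the sites `0, …, 3`, the term factorises off the
trace of a single `H_j`, which is zero. Only boundedly many pairs remain, each contributing at
most `2 ^ n ‖h‖⁴` in the maximum-row-sum norm. Hence `tr (H H₁ H H₁) / 2 ^ n` is
`(n - 3) ⟨H₁²⟩²` up to a bounded error, and `⟨H₁²⟩ = tr (h²) / 4` is bounded.
-/

section Counting

variable {ι α M R : Type*} [Fintype ι] [DecidableEq ι] [Fintype α]

lemma sum_comp_eval [AddCommMonoid M] (i : ι) (g : α → M) :
    ∑ x : ι → α, g (x i) = Fintype.card α ^ (Fintype.card ι - 1) • ∑ a, g a := by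
  rw [← (Equiv.funSplitAt i α).symm.sum_comp, Fintype.sum_prod_type]
  simp [Equiv.funSplitAt_symm_apply, Finset.smul_sum]

lemma sum_comp_eval₂ [AddCommMonoid M] {i j : ι} (hij : i ≠ j) (f : α → α → M) :
    ∑ x : ι → α, f (x i) (x j) =
      Fintype.card α ^ (Fintype.card ι - 2) • ∑ a, ∑ b, f a b := by
  rw [← (Equiv.funSplitAt i α).symm.sum_comp, Fintype.sum_prod_type]
  simp [Equiv.funSplitAt_symm_apply, hij.symm, sum_comp_eval, Finset.smul_sum, Nat.sub_sub]

lemma sum_mul_sum_of_dependsOn [CommSemiring R] {S : Finset ι} {f g : (ι → α) → R}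
    (hf : DependsOn f S) (hg : DependsOn g (↑S)ᶜ) :
    (∑ x, f x) * (∑ x, g x) = Fintype.card α ^ Fintype.card ι * ∑ x, f x * g x := by
  -- exchanging the `S`-parts of `x` and `y` is an involution of pairs of configurations
  let τ : (ι → α) × (ι → α) → (ι → α) × (ι → α) := fun p =>
    (S.piecewise p.1 p.2, S.piecewise p.2 p.1)
  have hτ : Function.Involutive τ := fun p => by
    ext j <;> by_cases hj : j ∈ S <;> simp [τ, hj]
  have hfg : ∀ x y, f x * g y = f (τ (x, y)).1 * g (τ (x, y)).1 := fun x y => by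
    congr 1
    · exact hf fun j hj => by simp [τ, Finset.mem_coe.mp hj]
    · exact hg fun j hj => by simp [τ, Finset.mem_coe.not.mp hj]
  rw [Finset.sum_mul_sum, ← Finset.sum_product', Finset.univ_product_univ,
    Fintype.sum_equiv (hτ.toPerm τ) _ (fun p => f p.1 * g p.1) fun p => hfg p.1 p.2,
    Fintype.sum_prod_type_right]
  simp only [Finset.sum_const, Finset.card_univ, Fintype.card_fun, nsmul_eq_mul, Nat.cast_pow]

end Counting

section Locality

variable {ι α R : Type*}

/-- `X = X' ⊗ 1` for some operator `X'` on the sites in `S`. -/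
structure IsLocal [Zero R] (S : Finset ι) (X : Matrix (ι → α) (ι → α) R) : Prop where
  apply_eq_zero : ∀ x y, ∀ j ∉ S, x j ≠ y j → X x y = 0
  apply_congr : ∀ x y z w, (∀ j ∈ S, x j = z j) → (∀ j ∈ S, y j = w j) →
    (∀ j ∉ S, x j = y j) → (∀ j ∉ S, z j = w j) → X x y = X z w

namespace IsLocal

section Zero

variable [Zero R] {S T : Finset ι} {X : Matrix (ι → α) (ι → α) R}

lemma eq_of_apply_ne_zero (hX : IsLocal S X) {x y : ι → α} (hxy : X x y ≠ 0) :
    ∀ j ∉ S, x j = y j :=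
  fun j hj => by_contra fun hne => hxy (hX.apply_eq_zero x y j hj hne)

lemma mono (hX : IsLocal S X) (hST : S ⊆ T) : IsLocal T X := by
  refine ⟨fun x y j hj => hX.apply_eq_zero x y j (fun h => hj (hST h)), ?_⟩
  intro x y z w hxz hyw hxy hzw
  by_cases hc : ∀ j ∉ S, x j = y j
  · refine hX.apply_congr x y z w (fun j hj => hxz j (hST hj)) (fun j hj => hyw j (hST hj)) hc ?_
    intro j hj
    by_cases hjT : j ∈ T
    · rw [← hxz j hjT, ← hyw j hjT]; exact hc j hj
    · exact hzw j hjT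
  · push Not at hc
    obtain ⟨j, hjS, hne⟩ := hc
    have hjT : j ∈ T := by_contra fun hjT => hne (hxy j hjT)
    rw [hX.apply_eq_zero x y j hjS hne,
      hX.apply_eq_zero z w j hjS (by rwa [← hxz j hjT, ← hyw j hjT])]

lemma dependsOn_diag (hX : IsLocal S X) : DependsOn (fun x => X x x) S :=
  fun x y hxy => hX.apply_congr x x y y hxy hxy (fun _ _ => rfl) (fun _ _ => rfl)

end Zero

section Fintype

variable [Fintype ι] [DecidableEq ι] [Fintype α] {S T : Finset ι}

lemma mul [Semiring R] [DecidableEq α] {X Y : Matrix (ι → α) (ι → α) R}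
    (hX : IsLocal S X) (hY : IsLocal S Y) : IsLocal S (X * Y) := by
  refine ⟨fun x y j hj hne => Finset.sum_eq_zero fun u _ => ?_, ?_⟩
  · by_cases hu : x j = u j
    · simp [hY.apply_eq_zero u y j hj (hu ▸ hne)]
    · simp [hX.apply_eq_zero x u j hj hu]
  intro x y z w hxz hyw hxy hzw
  -- off `S`, `φ` swaps `x j` and `z j`: it carries the configurations agreeing with `x` off `S`
  -- onto those agreeing with `z` off `S`
  let φ : (ι → α) ≃ (ι → α) := Equiv.piCongrRight fun j =>
    if j ∈ S then Equiv.refl α else Equiv.swap (x j) (z j)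
  have hφS : ∀ u, ∀ j ∈ S, φ u j = u j := fun u j hj => by simp [φ, hj]
  have hφ : ∀ u, ∀ j ∉ S, φ u j = Equiv.swap (x j) (z j) (u j) := fun u j hj => by
    simp [φ, hj]
  rw [Matrix.mul_apply, Matrix.mul_apply, ← φ.sum_comp (fun u => X z u * Y u w)]
  refine Finset.sum_congr rfl fun u _ => ?_
  by_cases hu : ∀ j ∉ S, x j = u j
  · have hφu : ∀ j ∉ S, z j = φ u j := fun j hj => by
      rw [hφ u j hj, ← hu j hj, Equiv.swap_apply_left]
    rw [hX.apply_congr x u z (φ u) hxz (fun j hj => (hφS u j hj).symm) hu hφu,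
      hY.apply_congr u y (φ u) w (fun j hj => (hφS u j hj).symm) hyw
        (fun j hj => (hu j hj).symm.trans (hxy j hj))
        (fun j hj => (hφu j hj).symm.trans (hzw j hj))]
  · push Not at hu
    obtain ⟨j, hj, hne⟩ := hu
    have hφne : z j ≠ φ u j := fun h =>
      hne (by simpa [hφ u j hj] using congrArg (Equiv.swap (x j) (z j)) h)
    rw [hX.apply_eq_zero x u j hj hne, hX.apply_eq_zero z (φ u) j hj hφne, zero_mul, zero_mul]

lemma mul_apply_of_disjoint [Semiring R] {X Y : Matrix (ι → α) (ι → α) R}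
    (hX : IsLocal S X) (hY : IsLocal T Y) (hST : Disjoint S T) (x y : ι → α) :
    (X * Y) x y = X x (S.piecewise y x) * Y (S.piecewise y x) y := by
  refine Fintype.sum_eq_single _ fun u hu => ?_
  by_contra hne
  have hXu := hX.eq_of_apply_ne_zero (left_ne_zero_of_mul hne)
  have hYu := hY.eq_of_apply_ne_zero (right_ne_zero_of_mul hne)
  refine hu (funext fun j => ?_)
  by_cases hj : j ∈ S
  · rw [Finset.piecewise_eq_of_mem _ _ _ hj]
    exact hYu j (Finset.disjoint_left.mp hST hj)
  · rw [Finset.piecewise_eq_of_notMem _ _ _ hj]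
    exact (hXu j hj).symm

lemma commute [CommSemiring R] {X Y : Matrix (ι → α) (ι → α) R}
    (hX : IsLocal S X) (hY : IsLocal T Y) (hST : Disjoint S T) : Commute X Y := by
  ext x y
  rw [hX.mul_apply_of_disjoint hY hST, hY.mul_apply_of_disjoint hX hST.symm]
  have hTS : ∀ j ∈ T, j ∉ S := fun j hj hjS => Finset.disjoint_left.mp hST hjS hj
  by_cases hxy : ∀ j ∉ S, j ∉ T → x j = y j
  · rw [mul_comm]
    congr 1
    · refine hY.apply_congr _ _ _ _ (fun j hj => ?_) (fun j hj => ?_) (fun j hj => ?_)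
        (fun j hj => ?_) <;> by_cases j ∈ S <;> by_cases j ∈ T <;> simp_all
    · refine hX.apply_congr _ _ _ _ (fun j hj => ?_) (fun j hj => ?_) (fun j hj => ?_)
        (fun j hj => ?_) <;> by_cases j ∈ S <;> by_cases j ∈ T <;> simp_all
  · push Not at hxy
    obtain ⟨j, hjS, hjT, hne⟩ := hxy
    rw [hY.apply_eq_zero (S.piecewise y x) y j hjT (by simpa [hjS] using hne),
      hX.apply_eq_zero (T.piecewise y x) y j hjS (by simpa [hjT] using hne), mul_zero, mul_zero]

lemma trace_mul_of_disjoint [CommSemiring R] {X Y : Matrix (ι → α) (ι → α) R}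
    (hX : IsLocal S X) (hY : IsLocal T Y) (hST : Disjoint S T) :
    Fintype.card α ^ Fintype.card ι * (X * Y).trace = X.trace * Y.trace := by
  have hYS : DependsOn (fun x => Y x x) (↑S)ᶜ :=
    hY.dependsOn_diag.mono (Set.subset_compl_iff_disjoint_left.mpr (by simpa using hST))
  have hdiag : (X * Y).trace = ∑ x, X x x * Y x x := Finset.sum_congr rfl fun x _ => by
    rw [Matrix.diag_apply, hX.mul_apply_of_disjoint hY hST, Finset.piecewise_same]
  rw [hdiag]
  exact (sum_mul_sum_of_dependsOn hX.dependsOn_diag hYS).symm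

lemma trace_mul_mul_mul_of_disjoint [DecidableEq α] [CommSemiring R]
    {A B C : Matrix (ι → α) (ι → α) R} (hA : IsLocal S A) (hC : IsLocal S C)
    (hB : IsLocal T B) (hST : Disjoint S T) :
    Fintype.card α ^ Fintype.card ι * (A * B * C * B).trace = (A * C).trace * (B * B).trace := by
  have hBC : B * C = C * B := hB.commute hC hST.symm
  rw [show A * B * C * B = A * C * (B * B) by rw [mul_assoc A B C, hBC, ← mul_assoc, mul_assoc]]
  exact (hA.mul hC).trace_mul_of_disjoint (hB.mul hB) hST

lemma trace_mul_eq_zero_of_disjoint [Nonempty α] [CommSemiring R] [NoZeroDivisors R]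
    [CharZero R] {X Y : Matrix (ι → α) (ι → α) R} (hX : IsLocal S X) (hY : IsLocal T Y)
    (hST : Disjoint S T) (hY0 : Y.trace = 0) : (X * Y).trace = 0 := by
  have h := hX.trace_mul_of_disjoint hY hST
  rw [hY0, mul_zero] at h
  exact (mul_eq_zero.mp h).resolve_left (pow_ne_zero _ (Nat.cast_ne_zero.mpr Fintype.card_ne_zero))

end Fintype

end IsLocal

end Locality

section TwoSite

variable {n : ℕ}

lemma val_nxt_eq_or (i : Fin n) : (nxt i : ℕ) = i + 1 ∨ (i + 1 = n ∧ (nxt i : ℕ) = 0) := by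
  rcases (Nat.succ_le_of_lt i.2).lt_or_eq with hlt | heq
  · exact Or.inl (Nat.mod_eq_of_lt hlt)
  · exact Or.inr ⟨heq, by simp only [nxt]; rw [show (i : ℕ) + 1 = n from heq, Nat.mod_self]⟩

lemma nxt_ne_self (hn : 2 ≤ n) (i : Fin n) : nxt i ≠ i := fun h => by
  have := congrArg Fin.val h
  rcases val_nxt_eq_or i with h' | h' <;> omega

lemma isLocal_twoSite (i : Fin n) (a : Matrix (Fin 2 × Fin 2) (Fin 2 × Fin 2) ℂ) :
    IsLocal {i, nxt i} (twoSite n i a) := by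
  constructor
  · intro x y j hj hne
    simp only [Finset.mem_insert, Finset.mem_singleton, not_or] at hj
    exact if_neg fun h => hne (h j hj.1 hj.2)
  · intro x y z w hxz hyw hxy hzw
    simp only [Finset.mem_insert, Finset.mem_singleton, forall_eq_or_imp, forall_eq, not_or,
      and_imp] at hxz hyw hxy hzw
    simp only [twoSite, if_pos hxy, if_pos hzw, hxz.1, hxz.2, hyw.1, hyw.2]

def setPair (i : Fin n) (x : Cfg n) (p : Fin 2 × Fin 2) : Cfg n :=
  Function.update (Function.update x i p.1) (nxt i) p.2

section SetPair

variable {i j : Fin n} {x y : Cfg n} {p : Fin 2 × Fin 2}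

lemma setPair_apply_self (hn : 2 ≤ n) : setPair i x p i = p.1 := by
  simp [setPair, (nxt_ne_self hn i).symm]

lemma setPair_apply_nxt : setPair i x p (nxt i) = p.2 :=
  Function.update_self _ _ _

lemma setPair_apply_of_ne (hi : j ≠ i) (hi' : j ≠ nxt i) : setPair i x p j = x j := by
  simp [setPair, hi, hi']

lemma setPair_eq (hn : 2 ≤ n) (hxy : ∀ j, j ≠ i → j ≠ nxt i → x j = y j) :
    setPair i x (y i, y (nxt i)) = y := by
  funext j
  by_cases hi : j = i
  · subst hi; exact setPair_apply_self hn
  by_cases hi' : j = nxt i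
  · subst hi'; exact setPair_apply_nxt
  · rw [setPair_apply_of_ne hi hi']; exact hxy j hi hi'

lemma setPair_injective (hn : 2 ≤ n) (i : Fin n) (x : Cfg n) :
    Function.Injective (setPair i x) := fun p q hpq =>
  Prod.ext (by simpa [setPair_apply_self hn] using congrFun hpq i)
    (by simpa [setPair_apply_nxt] using congrFun hpq (nxt i))

lemma twoSite_setPair_apply (hn : 2 ≤ n) (a : Matrix (Fin 2 × Fin 2) (Fin 2 × Fin 2) ℂ) :
    twoSite n i a (setPair i x p) y =
      if ∀ j, j ≠ i → j ≠ nxt i → x j = y j then a p (y i, y (nxt i)) else 0 := by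
  simp only [twoSite, setPair_apply_self hn, setPair_apply_nxt]
  congr 1
  exact propext <| forall_congr' fun j => imp_congr_right fun hi => imp_congr_right fun hi' => by
    rw [setPair_apply_of_ne hi hi']

end SetPair

lemma sum_twoSite_row {β : Type*} [AddCommMonoid β] (hn : 2 ≤ n) (i : Fin n)
    (a : Matrix (Fin 2 × Fin 2) (Fin 2 × Fin 2) ℂ) (x : Cfg n) (F : Cfg n → ℂ → β)
    (hF : ∀ y, F y 0 = 0) :
    ∑ y, F y (twoSite n i a x y) = ∑ p, F (setPair i x p) (a (x i, x (nxt i)) p) := by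
  have hrow : ∀ p, twoSite n i a x (setPair i x p) = a (x i, x (nxt i)) p := fun p => by
    simp only [twoSite, setPair_apply_self hn, setPair_apply_nxt]
    exact if_pos fun j hi hi' => (setPair_apply_of_ne hi hi').symm
  rw [← Finset.sum_subset (Finset.subset_univ (Finset.univ.image (setPair i x))),
    Finset.sum_image fun p _ q _ h => setPair_injective hn i x h]
  · simp only [hrow]
  · intro y _ hy
    have hxy : ¬ ∀ j, j ≠ i → j ≠ nxt i → x j = y j := fun hxy =>
      hy (Finset.mem_image.mpr ⟨_, Finset.mem_univ _, setPair_eq hn hxy⟩)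
    simp only [twoSite, if_neg hxy, hF]

lemma twoSite_mul (hn : 2 ≤ n) (i : Fin n) (a b : Matrix (Fin 2 × Fin 2) (Fin 2 × Fin 2) ℂ) :
    twoSite n i a * twoSite n i b = twoSite n i (a * b) := by
  ext x y
  rw [Matrix.mul_apply, sum_twoSite_row hn i a x (fun z t => t * twoSite n i b z y) (by simp)]
  simp only [twoSite_setPair_apply hn]
  unfold twoSite
  split_ifs <;> simp [Matrix.mul_apply]

lemma trace_twoSite (hn : 2 ≤ n) (i : Fin n) (a : Matrix (Fin 2 × Fin 2) (Fin 2 × Fin 2) ℂ) :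
    (twoSite n i a).trace = 2 ^ (n - 2) * a.trace := by
  have hdiag : (twoSite n i a).trace = ∑ x : Cfg n, a (x i, x (nxt i)) (x i, x (nxt i)) :=
    Finset.sum_congr rfl fun x _ => if_pos fun _ _ _ => rfl
  rw [hdiag, sum_comp_eval₂ (nxt_ne_self hn i).symm (fun u v => a (u, v) (u, v)),
    ← Fintype.sum_prod_type', nsmul_eq_mul]
  simp [Matrix.trace]

lemma trace_twoSite_eq_zero (hn : 2 ≤ n) (i : Fin n)
    {a : Matrix (Fin 2 × Fin 2) (Fin 2 × Fin 2) ℂ} (ha : a.trace = 0) :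
    (twoSite n i a).trace = 0 := by
  rw [trace_twoSite hn, ha, mul_zero]

lemma nTrace_twoSite_sq (hn : 2 ≤ n) (i : Fin n)
    (a : Matrix (Fin 2 × Fin 2) (Fin 2 × Fin 2) ℂ) :
    nTrace (twoSite n i a ^ 2) = (a * a).trace / 4 := by
  obtain ⟨k, rfl⟩ : ∃ k, n = k + 2 := ⟨n - 2, by omega⟩
  rw [nTrace, sq, twoSite_mul hn, trace_twoSite hn]
  simp only [Fintype.card_fun, Fintype.card_fin, Nat.cast_pow, Nat.cast_ofNat, Nat.add_sub_cancel]
  field_simp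
  ring

lemma trace_ham_mul_ham_mul (h : Matrix (Fin 2 × Fin 2) (Fin 2 × Fin 2) ℂ)
    (A : Matrix (Cfg n) (Cfg n) ℂ) :
    (ham h n * A * ham h n * A).trace =
      ∑ i, ∑ j, (twoSite n i h * A * twoSite n j h * A).trace := by
  simp only [ham, Finset.sum_mul, Finset.mul_sum, Matrix.trace_sum]
  exact Finset.sum_comm

end TwoSite

section Norms

attribute [local instance] Matrix.linftyOpSeminormedAddCommGroup

variable {m α : Type*} [Fintype m] [SeminormedAddCommGroup α]

lemma Matrix.sum_norm_row_le_linfty_opNorm (A : Matrix m m α) (i : m) :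
    ∑ j, ‖A i j‖ ≤ ‖A‖ := by
  rw [Matrix.linfty_opNorm_def]
  simpa using NNReal.coe_le_coe.mpr
    (Finset.le_sup (f := fun i => ∑ j, ‖A i j‖₊) (Finset.mem_univ i))

lemma Matrix.linfty_opNorm_le_of_sum_norm_row_le {A : Matrix m m α} {r : ℝ} (hr : 0 ≤ r)
    (hA : ∀ i, ∑ j, ‖A i j‖ ≤ r) : ‖A‖ ≤ r := by
  rw [Matrix.linfty_opNorm_def, ← NNReal.coe_mk r hr, NNReal.coe_le_coe]
  exact Finset.sup_le fun i _ => by simpa [← NNReal.coe_le_coe] using hA i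

lemma Matrix.norm_trace_le_card_mul_linfty_opNorm (A : Matrix m m α) :
    ‖A.trace‖ ≤ Fintype.card m * ‖A‖ := by
  calc ‖A.trace‖ ≤ ∑ i, ‖A i i‖ := norm_sum_le _ _
    _ ≤ ∑ _i : m, ‖A‖ := Finset.sum_le_sum fun i _ =>
        (Finset.single_le_sum (fun j _ => norm_nonneg (A i j)) (Finset.mem_univ i)).trans
          (A.sum_norm_row_le_linfty_opNorm i)
    _ = Fintype.card m * ‖A‖ := by simp

lemma norm_apply_le_opNorm {d : Type*} [Fintype d] [DecidableEq d] (X : Matrix d d ℂ) (p q : d) :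
    ‖X p q‖ ≤ opNorm X := by
  let L := LinearMap.toContinuousLinearMap (Matrix.toEuclideanLin X)
  calc ‖X p q‖ = ‖L (EuclideanSpace.single q (1 : ℂ)) p‖ := by
        simp [L, Matrix.toEuclideanLin, Matrix.mulVec_single]
    _ ≤ ‖L (EuclideanSpace.single q (1 : ℂ))‖ := PiLp.norm_apply_le _ _
    _ ≤ ‖L‖ * ‖EuclideanSpace.single q (1 : ℂ)‖ := L.le_opNorm _
    _ = opNorm X := by simp [opNorm, L]

lemma linfty_opNorm_le_card_mul_opNorm {d : Type*} [Fintype d] [DecidableEq d]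
    (X : Matrix d d ℂ) : ‖X‖ ≤ Fintype.card d * opNorm X :=
  Matrix.linfty_opNorm_le_of_sum_norm_row_le (mul_nonneg (Nat.cast_nonneg _) (norm_nonneg _))
    fun i => (Finset.sum_le_sum fun j _ => norm_apply_le_opNorm X i j).trans (by simp)

lemma linfty_opNorm_twoSite_le {n : ℕ} (hn : 2 ≤ n) (i : Fin n)
    (a : Matrix (Fin 2 × Fin 2) (Fin 2 × Fin 2) ℂ) : ‖twoSite n i a‖ ≤ ‖a‖ :=
  Matrix.linfty_opNorm_le_of_sum_norm_row_le (norm_nonneg a) fun x => by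
    rw [sum_twoSite_row hn i a x (fun _ t => ‖t‖) fun _ => norm_zero]
    exact a.sum_norm_row_le_linfty_opNorm _

end Norms

section Chain

attribute [local instance] Matrix.linftyOpSeminormedAddCommGroup

variable {n : ℕ} {s i j : Fin n} {h : Matrix (Fin 2 × Fin 2) (Fin 2 × Fin 2) ℂ}

lemma disjoint_pair_of_three_le (hs : (s : ℕ) = 1) (hi : 3 ≤ (i : ℕ)) :
    Disjoint ({i, nxt i} : Finset (Fin n)) {s, nxt s} := by
  rw [Finset.disjoint_left]
  intro k hk hk'
  simp only [Finset.mem_insert, Finset.mem_singleton, Fin.ext_iff] at hk hk'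
  rcases val_nxt_eq_or i with h1 | h1 <;> rcases val_nxt_eq_or s with h2 | h2 <;> omega

lemma pair_subset_of_lt_three (hi : (i : ℕ) < 3) :
    ({i, nxt i} : Finset (Fin n)) ⊆ Finset.univ.filter fun k : Fin n => (k : ℕ) < 4 := by
  intro k hk
  simp only [Finset.mem_insert, Finset.mem_singleton, Fin.ext_iff] at hk
  simp only [Finset.mem_filter, Finset.mem_univ, true_and]
  rcases val_nxt_eq_or i with h1 | h1 <;> omega

lemma disjoint_pair_of_four_le (hj : 4 ≤ (j : ℕ)) (hj' : (j : ℕ) + 1 ≠ n) :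
    Disjoint (Finset.univ.filter fun k : Fin n => (k : ℕ) < 4) {j, nxt j} := by
  rw [Finset.disjoint_right]
  intro k hk hk'
  simp only [Finset.mem_insert, Finset.mem_singleton, Fin.ext_iff] at hk
  simp only [Finset.mem_filter, Finset.mem_univ, true_and] at hk'
  rcases val_nxt_eq_or j with h1 | h1 <;> omega

lemma trace_term_of_three_le (hs : (s : ℕ) = 1)
    (horth : ∀ i j : Fin n, i ≠ j → (twoSite n i h * twoSite n j h).trace = 0)
    (hi : 3 ≤ (i : ℕ)) (hj : 3 ≤ (j : ℕ)) :
    (twoSite n i h * twoSite n s h * twoSite n j h * twoSite n s h).trace =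
      if i = j then 2 ^ (n - 4) * (h * h).trace ^ 2 else 0 := by
  have key := ((isLocal_twoSite i h).mono Finset.subset_union_left).trace_mul_mul_mul_of_disjoint
    ((isLocal_twoSite j h).mono Finset.subset_union_right) (isLocal_twoSite s h)
    (Finset.disjoint_union_left.mpr
      ⟨disjoint_pair_of_three_le hs hi, disjoint_pair_of_three_le hs hj⟩)
  have hn2 : 2 ≤ n := by omega
  have h2n : (2 : ℂ) ^ n ≠ 0 := pow_ne_zero _ two_ne_zero
  simp only [Fintype.card_fin, Nat.cast_ofNat] at key
  split_ifs with hij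
  · subst hij
    simp only [twoSite_mul hn2, trace_twoSite hn2] at key
    obtain ⟨k, rfl⟩ : ∃ k, n = k + 4 := ⟨n - 4, by omega⟩
    refine mul_left_cancel₀ h2n (key.trans ?_)
    simp only [show k + 4 - 2 = k + 2 by omega, Nat.add_sub_cancel]
    ring
  · rw [horth i j hij, zero_mul] at key
    exact (mul_eq_zero.mp key).resolve_left h2n

lemma trace_term_of_lt_three_of_four_le (hs : (s : ℕ) = 1) (htr : h.trace = 0)
    (hi : (i : ℕ) < 3) (hj : 4 ≤ (j : ℕ)) (hj' : (j : ℕ) + 1 ≠ n) :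
    (twoSite n i h * twoSite n s h * twoSite n j h * twoSite n s h).trace = 0 := by
  have hS := (isLocal_twoSite s h).mono (pair_subset_of_lt_three (by omega : (s : ℕ) < 3))
  rw [Matrix.trace_mul_cycle]
  exact (hS.mul (((isLocal_twoSite i h).mono (pair_subset_of_lt_three hi)).mul hS))
    |>.trace_mul_eq_zero_of_disjoint (isLocal_twoSite j h) (disjoint_pair_of_four_le hj hj')
      (trace_twoSite_eq_zero (by omega) _ htr)

lemma trace_term_of_four_le_of_lt_three (hs : (s : ℕ) = 1) (htr : h.trace = 0)
    (hi : 4 ≤ (i : ℕ)) (hi' : (i : ℕ) + 1 ≠ n) (hj : (j : ℕ) < 3) :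
    (twoSite n i h * twoSite n s h * twoSite n j h * twoSite n s h).trace = 0 := by
  have hS := (isLocal_twoSite s h).mono (pair_subset_of_lt_three (by omega : (s : ℕ) < 3))
  rw [mul_assoc, mul_assoc, Matrix.trace_mul_comm]
  exact (hS.mul (((isLocal_twoSite j h).mono (pair_subset_of_lt_three hj)).mul hS))
    |>.trace_mul_eq_zero_of_disjoint (isLocal_twoSite i h) (disjoint_pair_of_four_le hi hi')
      (trace_twoSite_eq_zero (by omega) _ htr)

lemma trace_term_eq_zero (hs : (s : ℕ) = 1) (htr : h.trace = 0)
    (hfar : ¬ (3 ≤ (i : ℕ) ∧ 3 ≤ (j : ℕ)))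
    (hnear : ¬ (((i : ℕ) < 4 ∨ (i : ℕ) + 1 = n) ∧ ((j : ℕ) < 4 ∨ (j : ℕ) + 1 = n))) :
    (twoSite n i h * twoSite n s h * twoSite n j h * twoSite n s h).trace = 0 := by
  by_cases hi : (i : ℕ) < 3
  · exact trace_term_of_lt_three_of_four_le hs htr hi (by omega) (by omega)
  · exact trace_term_of_four_le_of_lt_three hs htr (by omega) (by omega) (by omega)

lemma norm_trace_term_le (hn : 2 ≤ n) (i k j l : Fin n) :
    ‖(twoSite n i h * twoSite n k h * twoSite n j h * twoSite n l h).trace‖ ≤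
      2 ^ n * ‖h‖ ^ 4 := by
  refine (Matrix.norm_trace_le_card_mul_linfty_opNorm _).trans ?_
  simp only [Fintype.card_fun, Fintype.card_fin, Nat.cast_pow, Nat.cast_ofNat]
  gcongr
  calc _ ≤ ‖twoSite n i h‖ * ‖twoSite n k h‖ * ‖twoSite n j h‖ * ‖twoSite n l h‖ := by
        refine (Matrix.linfty_opNorm_mul _ _).trans ?_
        gcongr
        refine (Matrix.linfty_opNorm_mul _ _).trans ?_
        gcongr
        exact Matrix.linfty_opNorm_mul _ _
    _ ≤ ‖h‖ * ‖h‖ * ‖h‖ * ‖h‖ := by gcongr <;> exact linfty_opNorm_twoSite_le hn _ h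
    _ = ‖h‖ ^ 4 := by ring

lemma card_filter_three_le :
    (Finset.univ.filter fun i : Fin n => 3 ≤ (i : ℕ)).card = n - 3 := by
  have := Finset.card_filter_add_card_filter_not (s := Finset.univ) fun i : Fin n => 3 ≤ (i : ℕ)
  simp only [not_le, Fin.card_filter_val_lt, Finset.card_univ, Fintype.card_fin] at this
  omega

lemma card_filter_lt_four_or_last_le :
    (Finset.univ.filter fun i : Fin n => (i : ℕ) < 4 ∨ (i : ℕ) + 1 = n).card ≤ 5 := by
  rw [Finset.filter_or]
  refine (Finset.card_union_le _ _).trans ?_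
  have h4 := (Fin.card_filter_val_lt (n := n) (m := 4)).trans_le (min_le_right _ _)
  have h1 : (Finset.univ.filter fun i : Fin n => (i : ℕ) + 1 = n).card ≤ 1 :=
    Finset.card_le_one.mpr fun a ha b hb => by
      simp only [Finset.mem_filter, Finset.mem_univ, true_and] at ha hb
      exact Fin.ext (by omega)
  omega

lemma sum_trace_term_far (hn : 3 ≤ n) (hs : (s : ℕ) = 1)
    (horth : ∀ i j : Fin n, i ≠ j → (twoSite n i h * twoSite n j h).trace = 0) :
    ∑ i ∈ Finset.univ.filter (fun i : Fin n => 3 ≤ (i : ℕ)),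
      ∑ j ∈ Finset.univ.filter (fun i : Fin n => 3 ≤ (i : ℕ)),
        (twoSite n i h * twoSite n s h * twoSite n j h * twoSite n s h).trace =
      ((n : ℂ) - 3) * (2 ^ (n - 4) * (h * h).trace ^ 2) := by
  rw [Finset.sum_congr rfl fun i hi => Finset.sum_congr rfl fun j hj =>
    trace_term_of_three_le hs horth (Finset.mem_filter.mp hi).2 (Finset.mem_filter.mp hj).2]
  simp only [Finset.sum_ite_eq]
  rw [Finset.sum_ite_of_true fun i hi => hi, Finset.sum_const, card_filter_three_le,
    nsmul_eq_mul, Nat.cast_sub (by omega)]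
  push_cast
  rfl

lemma norm_sum_trace_term_sub_far_le (hs : (s : ℕ) = 1) (htr : h.trace = 0) :
    ‖∑ i, ∑ j, (twoSite n i h * twoSite n s h * twoSite n j h * twoSite n s h).trace -
      ∑ i ∈ Finset.univ.filter (fun i : Fin n => 3 ≤ (i : ℕ)),
        ∑ j ∈ Finset.univ.filter (fun i : Fin n => 3 ≤ (i : ℕ)),
          (twoSite n i h * twoSite n s h * twoSite n j h * twoSite n s h).trace‖ ≤
      25 * (2 ^ n * ‖h‖ ^ 4) := by
  set far := Finset.univ.filter fun i : Fin n => 3 ≤ (i : ℕ)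
  set near := Finset.univ.filter fun i : Fin n => (i : ℕ) < 4 ∨ (i : ℕ) + 1 = n
  set T : Fin n × Fin n → ℂ := fun p =>
    (twoSite n p.1 h * twoSite n s h * twoSite n p.2 h * twoSite n s h).trace
  have hsplit : ∑ i, ∑ j, T (i, j) - ∑ i ∈ far, ∑ j ∈ far, T (i, j) =
      ∑ p ∈ (far ×ˢ far)ᶜ ∩ near ×ˢ near, T p := by
    rw [← Finset.sum_product, ← Finset.sum_product, Finset.univ_product_univ,
      ← Finset.sum_add_sum_compl (far ×ˢ far) T, add_sub_cancel_left]
    refine (Finset.sum_subset Finset.inter_subset_left fun p hp hp' => ?_).symm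
    simp only [far, near, Finset.mem_inter, Finset.mem_compl, Finset.mem_product,
      Finset.mem_filter, Finset.mem_univ, true_and, not_and] at hp hp'
    exact trace_term_eq_zero hs htr (fun h' => hp h'.1 h'.2) fun h' => hp' hp h'.1 h'.2
  rw [hsplit]
  calc _ ≤ ∑ p ∈ (far ×ˢ far)ᶜ ∩ near ×ˢ near, ‖T p‖ := norm_sum_le _ _
    _ ≤ ((far ×ˢ far)ᶜ ∩ near ×ˢ near).card • (2 ^ n * ‖h‖ ^ 4) :=
        Finset.sum_le_card_nsmul _ _ _ fun p _ => norm_trace_term_le (by omega) _ _ _ _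
    _ ≤ 25 * (2 ^ n * ‖h‖ ^ 4) := by
        have hcard : ((far ×ˢ far)ᶜ ∩ near ×ˢ near).card ≤ 5 * 5 :=
          ((Finset.card_le_card Finset.inter_subset_right).trans_eq (Finset.card_product _ _)).trans
            (Nat.mul_le_mul card_filter_lt_four_or_last_le card_filter_lt_four_or_last_le)
        rw [nsmul_eq_mul]
        gcongr
        exact_mod_cast hcard

lemma norm_trace_ham_sub_le (hn : 4 ≤ n) (hs : (s : ℕ) = 1) (htr : h.trace = 0)
    (horth : ∀ i j : Fin n, i ≠ j → (twoSite n i h * twoSite n j h).trace = 0) :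
    ‖(ham h n * twoSite n s h * ham h n * twoSite n s h).trace / 2 ^ n -
        n * nTrace (twoSite n s h ^ 2) ^ 2‖ ≤
      25 * ‖h‖ ^ 4 + 3 * ‖(h * h).trace‖ ^ 2 / 16 := by
  have hbound := norm_sum_trace_term_sub_far_le hs htr
  rw [sum_trace_term_far (by omega) hs horth] at hbound
  set D := ∑ i, ∑ j, (twoSite n i h * twoSite n s h * twoSite n j h * twoSite n s h).trace -
    ((n : ℂ) - 3) * (2 ^ (n - 4) * (h * h).trace ^ 2)
  have htrace : (ham h n * twoSite n s h * ham h n * twoSite n s h).trace =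
      D + ((n : ℂ) - 3) * (2 ^ (n - 4) * (h * h).trace ^ 2) := by
    rw [trace_ham_mul_ham_mul]
    exact (sub_add_cancel _ _).symm
  have hexpr : (ham h n * twoSite n s h * ham h n * twoSite n s h).trace / 2 ^ n -
      n * nTrace (twoSite n s h ^ 2) ^ 2 = D / 2 ^ n - 3 * (h * h).trace ^ 2 / 16 := by
    rw [htrace, nTrace_twoSite_sq (by omega)]
    clear_value D
    obtain ⟨k, rfl⟩ : ∃ k, n = k + 4 := ⟨n - 4, by omega⟩
    simp only [Nat.add_sub_cancel]
    push_cast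
    field_simp
    ring
  rw [hexpr]
  refine (norm_sub_le _ _).trans (add_le_add ?_ (by simp [norm_pow]))
  rw [norm_div, norm_pow, Complex.norm_two, div_le_iff₀ (by positivity)]
  linarith

lemma remainder_le_of_opNorm_le_one (hop : opNorm h ≤ 1) :
    25 * ‖h‖ ^ 4 + 3 * ‖(h * h).trace‖ ^ 2 / 16 ≤ 7168 := by
  have hh : ‖h‖ ≤ 4 := (linfty_opNorm_le_card_mul_opNorm h).trans (by simpa using hop)
  have h0 := norm_nonneg h
  have hc : ‖(h * h).trace‖ ≤ 64 :=
    calc _ ≤ 4 * ‖h * h‖ := by simpa using Matrix.norm_trace_le_card_mul_linfty_opNorm (h * h)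
      _ ≤ 4 * (‖h‖ * ‖h‖) := by gcongr; exact Matrix.linfty_opNorm_mul h h
      _ ≤ 64 := by nlinarith
  nlinarith [pow_le_pow_left₀ h0 hh 4, pow_le_pow_left₀ (norm_nonneg _) hc 2]

end Chain

theorem stmt8 :
    ∃ C : ℝ, 0 < C ∧ ∀ n : ℕ, (hn : 5 ≤ n) →
      ∀ h : Matrix (Fin 2 × Fin 2) (Fin 2 × Fin 2) ℂ,
        h.IsHermitian → h.trace = 0 → opNorm h ≤ 1 →
        (∀ i j : Fin n, i ≠ j → (twoSite n i h * twoSite n j h).trace = 0) →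
        ‖((ham h n * twoSite n ⟨1, by omega⟩ h * ham h n * twoSite n ⟨1, by omega⟩ h).trace
                / 2 ^ n -
              n * nTrace (twoSite n ⟨1, by omega⟩ h ^ 2) ^ 2)‖ ≤ C :=
  ⟨7168, by norm_num, fun _ hn _ _ htr hop horth =>
    (norm_trace_ham_sub_le (by omega) rfl htr horth).trans (remainder_le_of_opNorm_le_one hop)⟩
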